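/- arXiv:2201.06010 — 3 statements merged into one kernel-verified Lean document; each statement's English description precedes it below -/
import Mathlib

section
/- Let ℓ > 0 and let θ, φ : [0, ℓ] → ℝ be C² functions, and let c : [0, ℓ] → ℝ and p > 0 be such that: θ'' (s) - (c(s) + p²) θ(s) > 0 on [0, ℓ], θ > 0 on (0, ℓ), θ(0) = θ(ℓ) = 0; and φ''(s) + (π²/ℓ² - p²) φ(s) = 0 on [0, ℓ], φ > 0 on (0, ℓ], φ(0) = 0, with 0 < p < π/ℓ. If moreover -c(s) ≤ π²/ℓ² for all s ∈ [0, ℓ], then a contradiction follows (i.e., no such pair θ, φ exists). Equivalently: if θ satisfies θ'' - (c + p²)θ > 0 on [0,ℓ] with θ(0)=θ(ℓ)=0 and θ > 0 on (0,ℓ), then sup_{s∈[0,ℓ]} (-c(s)) > π²/ℓ². -/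
/-!
Sturm comparison. With `q = c + p²`, the function `θ` satisfies `θ'' > q θ`, while
`-c ≤ π²/ℓ²` turns the equation of `φ` into `φ'' ≤ q φ`. The Wronskian `W = φ θ' - φ' θ` then
has `W' = φ θ'' - φ'' θ > 0` on `(0, ℓ)`, so `W(0) < W(ℓ)`. But `W(0) = 0` because both functions
vanish at `0`, and `W(ℓ) = φ(ℓ) θ'(ℓ) ≤ 0` because `θ ≥ 0` to the left of its zero at `ℓ`.
-/

open Real Set

noncomputable def wronskian (f g : ℝ → ℝ) (s : ℝ) : ℝ :=
  f s * deriv g s - deriv f s * g s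

theorem hasDerivAt_wronskian {f g : ℝ → ℝ} {x : ℝ}
    (hf : DifferentiableAt ℝ f x) (hf' : DifferentiableAt ℝ (deriv f) x)
    (hg : DifferentiableAt ℝ g x) (hg' : DifferentiableAt ℝ (deriv g) x) :
    HasDerivAt (wronskian f g) (f x * deriv (deriv g) x - deriv (deriv f) x * g x) x :=
  ((hf.hasDerivAt.mul hg'.hasDerivAt).sub (hf'.hasDerivAt.mul hg.hasDerivAt)).congr_deriv
    (by ring)

theorem deriv_nonpos_of_nonneg_on_Ioo_of_eq_zero {f : ℝ → ℝ} {a b : ℝ} (hab : a < b)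
    (hf : DifferentiableAt ℝ f b) (hnonneg : ∀ s ∈ Ioo a b, 0 ≤ f s) (hb : f b = 0) :
    deriv f b ≤ 0 := by
  have hslope : Filter.Tendsto (slope f b) (nhdsWithin b (Iio b)) (nhds (deriv f b)) :=
    hf.hasDerivAt.tendsto_slope.mono_left (nhdsWithin_mono _ fun _ hx ↦ ne_of_lt hx)
  refine le_of_tendsto hslope ?_
  filter_upwards [Ioo_mem_nhdsLT hab] with s hs
  rw [slope_def_field, hb]
  exact div_nonpos_of_nonneg_of_nonpos (by linarith [hnonneg s hs]) (by linarith [hs.2])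

theorem sturm_comparison {θ φ q : ℝ → ℝ} {a b : ℝ} (hab : a < b)
    (hθ : Differentiable ℝ θ) (hθ' : Differentiable ℝ (deriv θ))
    (hφ : Differentiable ℝ φ) (hφ' : Differentiable ℝ (deriv φ))
    (hθq : ∀ s ∈ Ioo a b, q s * θ s < deriv (deriv θ) s)
    (hφq : ∀ s ∈ Ioo a b, deriv (deriv φ) s ≤ q s * φ s)
    (hθnonneg : ∀ s ∈ Ioo a b, 0 ≤ θ s) (hφpos : ∀ s ∈ Ioo a b, 0 < φ s)
    (hθa : θ a = 0) (hθb : θ b = 0) (hφa : φ a = 0) (hφb : 0 ≤ φ b) : False := by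
  have hW : ∀ s, HasDerivAt (wronskian φ θ)
      (φ s * deriv (deriv θ) s - deriv (deriv φ) s * θ s) s := fun s ↦
    hasDerivAt_wronskian (hφ s) (hφ' s) (hθ s) (hθ' s)
  have hWmono : StrictMonoOn (wronskian φ θ) (Icc a b) := by
    refine strictMonoOn_of_deriv_pos (convex_Icc a b)
      (fun s _ ↦ (hW s).continuousAt.continuousWithinAt) fun s hs ↦ ?_
    rw [interior_Icc] at hs
    rw [(hW s).deriv]
    calc 0 = φ s * (q s * θ s) - q s * φ s * θ s := by ring
      _ < φ s * deriv (deriv θ) s - q s * φ s * θ s := by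
        gcongr
        · exact hφpos s hs
        · exact hθq s hs
      _ ≤ φ s * deriv (deriv θ) s - deriv (deriv φ) s * θ s := by
        gcongr
        · exact hθnonneg s hs
        · exact hφq s hs
  have hWa : wronskian φ θ a = 0 := by simp [wronskian, hθa, hφa]
  have hWb : wronskian φ θ b ≤ 0 := by
    simpa [wronskian, hθb] using mul_nonpos_of_nonneg_of_nonpos hφb
      (deriv_nonpos_of_nonneg_on_Ioo_of_eq_zero hab (hθ b) hθnonneg hθb)
  have := hWmono (left_mem_Icc.mpr hab.le) (right_mem_Icc.mpr hab.le) hab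
  linarith

theorem stmt0_general (ℓ p : ℝ) (θ φ c : ℝ → ℝ)
    (hℓ : 0 < ℓ)
    (hθC : ContDiff ℝ 2 θ) (hφC : ContDiff ℝ 2 φ)
    (hθode : ∀ s ∈ Icc (0:ℝ) ℓ, deriv (deriv θ) s - (c s + p ^ 2) * θ s > 0)
    (hθpos : ∀ s ∈ Ioo (0:ℝ) ℓ, 0 < θ s)
    (hθ0 : θ 0 = 0) (hθℓ : θ ℓ = 0)
    (hφode : ∀ s ∈ Icc (0:ℝ) ℓ,
      deriv (deriv φ) s + (π ^ 2 / ℓ ^ 2 - p ^ 2) * φ s = 0)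
    (hφpos : ∀ s ∈ Ioc (0:ℝ) ℓ, 0 < φ s)
    (hφ0 : φ 0 = 0)
    (hc : ∀ s ∈ Icc (0:ℝ) ℓ, -c s ≤ π ^ 2 / ℓ ^ 2) :
    False := by
  refine sturm_comparison (q := fun s ↦ c s + p ^ 2) hℓ (hθC.differentiable two_ne_zero)
    hθC.differentiable_deriv_two (hφC.differentiable two_ne_zero) hφC.differentiable_deriv_two
    (fun s hs ↦ by linarith [hθode s (Ioo_subset_Icc_self hs)]) (fun s hs ↦ ?_)
    (fun s hs ↦ (hθpos s hs).le) (fun s hs ↦ hφpos s (Ioo_subset_Ioc_self hs))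
    hθ0 hθℓ hφ0 (hφpos ℓ (right_mem_Ioc.mpr hℓ)).le
  have hcπ : 0 ≤ (c s + π ^ 2 / ℓ ^ 2) * φ s :=
    mul_nonneg (by linarith [hc s (Ioo_subset_Icc_self hs)])
      (hφpos s (Ioo_subset_Ioc_self hs)).le
  linarith [hφode s (Ioo_subset_Icc_self hs)]

/-- Sturm comparison contradiction behind Lemma "Necessary size of ḡ":
no pair (θ, φ) as below can exist when `-c ≤ π²/ℓ²` on `[0, ℓ]`. -/
theorem stmt0 (ℓ p : ℝ) (θ φ c : ℝ → ℝ)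
    (hℓ : 0 < ℓ) (hp : 0 < p) (hpπ : p < π / ℓ)
    (hθC : ContDiff ℝ 2 θ) (hφC : ContDiff ℝ 2 φ)
    (hθode : ∀ s ∈ Icc (0:ℝ) ℓ, deriv (deriv θ) s - (c s + p ^ 2) * θ s > 0)
    (hθpos : ∀ s ∈ Ioo (0:ℝ) ℓ, 0 < θ s)
    (hθ0 : θ 0 = 0) (hθℓ : θ ℓ = 0)
    (hφode : ∀ s ∈ Icc (0:ℝ) ℓ,
      deriv (deriv φ) s + (π ^ 2 / ℓ ^ 2 - p ^ 2) * φ s = 0)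
    (hφpos : ∀ s ∈ Ioc (0:ℝ) ℓ, 0 < φ s)
    (hφ0 : φ 0 = 0)
    (hc : ∀ s ∈ Icc (0:ℝ) ℓ, -c s ≤ π ^ 2 / ℓ ^ 2) :
    False :=
  stmt0_general ℓ p θ φ c hℓ hθC hφC hθode hθpos hθ0 hθℓ hφode hφpos hφ0 hc
end

section
/- Let α > 0, β > π/α, and suppose ḡ is a symmetric bilinear form field on ℝ² with -ḡ(Z, Z) ≥ β² for both null directions Z = ∂_t ± ∂_ω of 𝔤 = -dt² + dω². Then the function η(t, ω) = sin(π(t-ω+α)/(2α)) sin(π(t+ω+α)/(2α)) satisfies the generalized null convexity criterion on the causal diamond D_α = {-α < t ± ω < α}: namely (𝔇²η - η ḡ)(Z, Z) ≥ (β² - (π/α)²) η > 0 holds pointwise in D_α for null Z normalized as above, η > 0 in D_α and η = 0 on ∂D_α. -/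
/-!
Writing `k = π / α`, the product-to-sum formula turns `η` into `(cos (k t) + cos (k ω)) / 2`, a sum of a
function of `t` and a function of `ω`. Hence the mixed derivative vanishes, the two pure second derivatives
add up to `-k² η`, and `(𝔇²η - η ḡ)(Z, Z) = -k² η - η ḡ(Z, Z) ≥ (β² - k²) η` for either null `Z`.
On the diamond both sine factors have arguments in `(0, π)`, and on its boundary one of them is `0` or `π`.
-/

open Real Set

/-- `η(t,ω) = sin(π(t-ω+α)/(2α)) · sin(π(t+ω+α)/(2α))` on the causal diamond. -/
noncomputable def diamondEta (α t ω : ℝ) : ℝ :=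
  Real.sin (π * (t - ω + α) / (2 * α)) * Real.sin (π * (t + ω + α) / (2 * α))

lemma diamondEta_eq_cos_add_cos {α : ℝ} (hα : α ≠ 0) (t ω : ℝ) :
    diamondEta α t ω = (cos (π / α * t) + cos (π / α * ω)) / 2 := by
  set A := π * (t - ω + α) / (2 * α)
  set B := π * (t + ω + α) / (2 * α)
  have hsub : π / α * ω = B - A := by simp only [A, B]; field_simp; ring
  have hadd : π / α * t = A + B - π := by simp only [A, B]; field_simp; ring
  rw [diamondEta, hsub, hadd, cos_sub_pi, cos_add, cos_sub]
  ring

lemma hasDerivAt_cos_const_mul (k x : ℝ) :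
    HasDerivAt (fun x => cos (k * x)) (-(k * sin (k * x))) x := by
  simpa [mul_comm] using ((hasDerivAt_id x).const_mul k).cos

lemma hasDerivAt_sin_const_mul (k x : ℝ) :
    HasDerivAt (fun x => sin (k * x)) (k * cos (k * x)) x := by
  simpa [mul_comm] using ((hasDerivAt_id x).const_mul k).sin

lemma deriv_deriv_cos_const_mul_add_const (k c x : ℝ) :
    deriv (deriv fun x => (cos (k * x) + c) / 2) x = -(k ^ 2 * cos (k * x)) / 2 := by
  have hfirst : deriv (fun x => (cos (k * x) + c) / 2) = fun x => -(k * sin (k * x)) / 2 :=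
    funext fun x => (((hasDerivAt_cos_const_mul k x).add_const c).div_const 2).deriv
  rw [hfirst]
  exact (((hasDerivAt_sin_const_mul k x).const_mul k).neg.div_const 2).deriv.trans (by ring)

lemma deriv_diamondEta_fst {α : ℝ} (hα : α ≠ 0) (t ω : ℝ) :
    deriv (fun t' => diamondEta α t' ω) t = -(π / α * sin (π / α * t)) / 2 := by
  simp_rw [diamondEta_eq_cos_add_cos hα]
  exact (((hasDerivAt_cos_const_mul _ t).add_const _).div_const 2).deriv

lemma deriv_deriv_diamondEta_fst {α : ℝ} (hα : α ≠ 0) (t ω : ℝ) :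
    deriv (deriv fun t' => diamondEta α t' ω) t = -((π / α) ^ 2 * cos (π / α * t)) / 2 := by
  simp_rw [diamondEta_eq_cos_add_cos hα]
  exact deriv_deriv_cos_const_mul_add_const _ _ t

lemma deriv_deriv_diamondEta_snd {α : ℝ} (hα : α ≠ 0) (t ω : ℝ) :
    deriv (deriv fun ω' => diamondEta α t ω') ω = -((π / α) ^ 2 * cos (π / α * ω)) / 2 := by
  simp_rw [diamondEta_eq_cos_add_cos hα, add_comm (cos (π / α * t))]
  exact deriv_deriv_cos_const_mul_add_const _ _ ω

lemma deriv_deriv_diamondEta_mixed {α : ℝ} (hα : α ≠ 0) (t ω : ℝ) :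
    deriv (fun ω' => deriv (fun t' => diamondEta α t' ω') t) ω = 0 := by
  simp_rw [deriv_diamondEta_fst hα, deriv_const]

lemma null_hessian_diamondEta {α : ℝ} (hα : α ≠ 0) (t ω ε : ℝ) :
    deriv (deriv (fun t' => diamondEta α t' ω)) t
        + 2 * ε * deriv (fun ω' => deriv (fun t' => diamondEta α t' ω') t) ω
        + deriv (deriv (fun ω' => diamondEta α t ω')) ω
      = -(π / α) ^ 2 * diamondEta α t ω := by
  rw [deriv_deriv_diamondEta_fst hα, deriv_deriv_diamondEta_mixed hα,
    deriv_deriv_diamondEta_snd hα, diamondEta_eq_cos_add_cos hα]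
  ring

lemma sin_pi_mul_add_div_pos {α s : ℝ} (hs : |s| < α) : 0 < sin (π * (s + α) / (2 * α)) := by
  rw [abs_lt] at hs
  have hα : 0 < α := by linarith
  apply sin_pos_of_pos_of_lt_pi
  · exact div_pos (mul_pos pi_pos (by linarith)) (by linarith)
  · rw [div_lt_iff₀ (by linarith)]
    nlinarith [pi_pos]

lemma sin_pi_mul_add_div_eq_zero {α s : ℝ} (hα : 0 < α) (hs : |s| = α) :
    sin (π * (s + α) / (2 * α)) = 0 := by
  rcases (abs_eq hα.le).mp hs with h | h
  · rw [h, show π * (α + α) / (2 * α) = π by field_simp; ring, sin_pi]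
  · rw [h, neg_add_cancel, mul_zero, zero_div, sin_zero]

lemma diamondEta_pos {α t ω : ℝ} (h₁ : |t - ω| < α) (h₂ : |t + ω| < α) : 0 < diamondEta α t ω :=
  mul_pos (sin_pi_mul_add_div_pos h₁) (sin_pi_mul_add_div_pos h₂)

lemma diamondEta_eq_zero {α t ω : ℝ} (hα : 0 < α) (h : |t - ω| = α ∨ |t + ω| = α) :
    diamondEta α t ω = 0 := by
  rcases h with h | h
  · rw [diamondEta, sin_pi_mul_add_div_eq_zero hα h, zero_mul]
  · rw [diamondEta, sin_pi_mul_add_div_eq_zero hα h, mul_zero]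

theorem stmt6_general (α β : ℝ) (hα : 0 < α) (hβ : π / α < β)
    (gbar : ℝ × ℝ → ℝ × ℝ → ℝ × ℝ → ℝ)
    (hnull : ∀ x : ℝ × ℝ, ∀ ε : ℝ, ε = 1 ∨ ε = -1 →
      -(gbar x (1, ε) (1, ε)) ≥ β ^ 2) :
    (∀ t ω : ℝ, |t - ω| < α → |t + ω| < α → 0 < diamondEta α t ω) ∧
    (∀ t ω : ℝ, |t - ω| ≤ α → |t + ω| ≤ α → (|t - ω| = α ∨ |t + ω| = α) →
      diamondEta α t ω = 0) ∧
    (∀ t ω : ℝ, |t - ω| < α → |t + ω| < α → ∀ ε : ℝ, ε = 1 ∨ ε = -1 →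
      (deriv (deriv (fun t' => diamondEta α t' ω)) t
          + 2 * ε * deriv (fun ω' => deriv (fun t' => diamondEta α t' ω') t) ω
          + deriv (deriv (fun ω' => diamondEta α t ω')) ω
          - diamondEta α t ω * gbar (t, ω) (1, ε) (1, ε)
        ≥ (β ^ 2 - (π / α) ^ 2) * diamondEta α t ω) ∧
      0 < (β ^ 2 - (π / α) ^ 2) * diamondEta α t ω) := by
  refine ⟨fun t ω => diamondEta_pos, fun t ω _ _ => diamondEta_eq_zero hα, ?_⟩
  intro t ω h₁ h₂ ε hε
  have hη := diamondEta_pos h₁ h₂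
  have hgap : 0 < β ^ 2 - (π / α) ^ 2 :=
    sub_pos.2 (pow_lt_pow_left₀ hβ (div_pos pi_pos hα).le two_ne_zero)
  have hg := mul_le_mul_of_nonneg_left (hnull (t, ω) ε hε) hη.le
  rw [null_hessian_diamondEta hα.ne']
  exact ⟨by linarith, mul_pos hgap hη⟩

/-- Proposition "AdS_2d": if `-ḡ(Z,Z) ≥ β²` on the null directions `Z = ∂_t ± ∂_ω`
of `𝔤 = -dt² + dω²` and `β > π/α`, then `η` witnesses the GNCC on the causal
diamond `D_α`: `(𝔇²η - η ḡ)(Z,Z) ≥ (β² - (π/α)²) η > 0` in `D_α`, with `η > 0`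
inside and `η = 0` on the boundary. -/
theorem stmt6 (α β : ℝ) (hα : 0 < α) (hβ : π / α < β)
    (gbar : ℝ × ℝ → ℝ × ℝ → ℝ × ℝ → ℝ)
    (hsym : ∀ x Z W, gbar x Z W = gbar x W Z)
    (hnull : ∀ x : ℝ × ℝ, ∀ ε : ℝ, ε = 1 ∨ ε = -1 →
      -(gbar x (1, ε) (1, ε)) ≥ β ^ 2) :
    (∀ t ω : ℝ, |t - ω| < α → |t + ω| < α → 0 < diamondEta α t ω) ∧
    (∀ t ω : ℝ, |t - ω| ≤ α → |t + ω| ≤ α → (|t - ω| = α ∨ |t + ω| = α) →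
      diamondEta α t ω = 0) ∧
    (∀ t ω : ℝ, |t - ω| < α → |t + ω| < α → ∀ ε : ℝ, ε = 1 ∨ ε = -1 →
      (deriv (deriv (fun t' => diamondEta α t' ω)) t
          + 2 * ε * deriv (fun ω' => deriv (fun t' => diamondEta α t' ω') t) ω
          + deriv (deriv (fun ω' => diamondEta α t ω')) ω
          - diamondEta α t ω * gbar (t, ω) (1, ε) (1, ε)
        ≥ (β ^ 2 - (π / α) ^ 2) * diamondEta α t ω) ∧
      0 < (β ^ 2 - (π / α) ^ 2) * diamondEta α t ω) :=
  stmt6_general α β hα hβ gbar hnull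
end

section
/- Suppose ḡ is a symmetric (0,2)-tensor on a Lorentzian manifold (I, 𝔤) with -ḡ(X, X) ≤ 0 for every null vector X (𝔤(X,X) = 0). Then no open domain D ⊆ I with compact closure can satisfy the generalized null convexity criterion, provided D is crossed by at least one 𝔤-null geodesic λ : [0, ℓ] → I entering and exiting through ∂D (i.e., λ(0), λ(ℓ) ∈ ∂D and λ(s) ∈ D for 0 < s < ℓ). -/
open Real Set

/-! Along the null geodesic put `θ = η ∘ λ`. It vanishes at both endpoints and is positive in
between, so it cannot be convex on `[0, ℓ]`: somewhere inside `θ'' ≤ 0`. There the GNCC gives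
`θ'' > θ ḡ + c θ 𝔭 > 0`, because `ḡ ≥ 0` on null vectors. -/

theorem exists_mem_Ioo_iterate_deriv_two_nonpos {θ : ℝ → ℝ} {a b : ℝ}
    (hθ : ContinuousOn θ (Icc a b)) (ha : θ a = 0) (hb : θ b = 0)
    (hpos : ∃ x ∈ Ioo a b, 0 < θ x) : ∃ s ∈ Ioo a b, deriv^[2] θ s ≤ 0 := by
  by_contra! hderiv
  obtain ⟨x, hx, hθx⟩ := hpos
  have hconv : ConvexOn ℝ (Icc a b) θ :=
    (strictConvexOn_of_deriv2_pos (convex_Icc a b) hθ (by simpa using hderiv)).convexOn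
  have hab : a ≤ b := (hx.1.trans hx.2).le
  have hle := hconv.le_on_segment (left_mem_Icc.2 hab) (right_mem_Icc.2 hab)
    (segment_eq_Icc hab ▸ Ioo_subset_Icc_self hx)
  rw [ha, hb, max_self] at hle
  exact hle.not_gt hθx

theorem stmt7_general {I : Type*} [TopologicalSpace I]
    (D : Set I)
    (ℓ : ℝ) (hℓ : 0 < ℓ) (lam : ℝ → I)
    (hin : ∀ s ∈ Ioo (0:ℝ) ℓ, lam s ∈ D)
    (h0 : lam 0 ∈ frontier D) (hl : lam ℓ ∈ frontier D)
    (gbar : ℝ → ℝ) (hgbar : ∀ s ∈ Icc (0:ℝ) ℓ, -gbar s ≤ 0)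
    (η : I → ℝ) (c : ℝ) (hc : 0 < c)
    (pq : ℝ → ℝ) (pmin : ℝ) (hpmin : 0 < pmin)
    (hpq : ∀ s ∈ Icc (0:ℝ) ℓ, pmin ≤ pq s)
    (hηpos : ∀ x ∈ D, 0 < η x)
    (hη0 : ∀ x ∈ frontier D, η x = 0)
    (hθC : ContDiff ℝ 2 (fun s => η (lam s)))
    (hGNCC : ∀ s ∈ Icc (0:ℝ) ℓ,
      deriv (deriv (fun t => η (lam t))) s - η (lam s) * gbar s
        > c * η (lam s) * pq s) :
    False := by
  have hmid : ℓ / 2 ∈ Ioo 0 ℓ := ⟨by linarith, by linarith⟩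
  obtain ⟨s, hs, hθ''⟩ := exists_mem_Ioo_iterate_deriv_two_nonpos hθC.continuous.continuousOn
    (hη0 _ h0) (hη0 _ hl) ⟨ℓ / 2, hmid, hηpos _ (hin _ hmid)⟩
  have hs' : s ∈ Icc 0 ℓ := Ioo_subset_Icc_self hs
  have hθs : 0 < η (lam s) := hηpos _ (hin s hs)
  have hgs : 0 ≤ η (lam s) * gbar s := mul_nonneg hθs.le (by linarith [hgbar s hs'])
  have hps : 0 < c * η (lam s) * pq s := by
    have := hpmin.trans_le (hpq s hs')
    positivity
  have := hGNCC s hs'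
  simp only [Function.iterate_succ, Function.iterate_zero, Function.comp_apply, id] at hθ''
  linarith

/-- Corollary "Failure of GNCC": if `-ḡ(X,X) ≤ 0` along null directions, then no
domain `D` (open, with compact closure, crossed by a null geodesic `λ` entering
and exiting through `∂D`) can satisfy the GNCC.  The Lorentzian-geometric data is
encoded along the geodesic: `gbar s = ḡ(λ̇(s), λ̇(s))`, `pq s = 𝔭(λ̇(s), λ̇(s))`
(bounded below by `pmin > 0` by compactness), and the GNCC inequality restricted
along the null geodesic, using `𝔇²η(λ̇,λ̇)(s) = (η ∘ λ)''(s)`. -/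
theorem stmt7 {I : Type*} [TopologicalSpace I]
    (D : Set I) (hDopen : IsOpen D) (hDcpt : IsCompact (closure D))
    (ℓ : ℝ) (hℓ : 0 < ℓ) (lam : ℝ → I)
    (hin : ∀ s ∈ Ioo (0:ℝ) ℓ, lam s ∈ D)
    (h0 : lam 0 ∈ frontier D) (hl : lam ℓ ∈ frontier D)
    (gbar : ℝ → ℝ) (hgbar : ∀ s ∈ Icc (0:ℝ) ℓ, -gbar s ≤ 0)
    (η : I → ℝ) (c : ℝ) (hc : 0 < c)
    (pq : ℝ → ℝ) (pmin : ℝ) (hpmin : 0 < pmin)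
    (hpq : ∀ s ∈ Icc (0:ℝ) ℓ, pmin ≤ pq s)
    (hηpos : ∀ x ∈ D, 0 < η x)
    (hη0 : ∀ x ∈ frontier D, η x = 0)
    (hθC : ContDiff ℝ 2 (fun s => η (lam s)))
    (hGNCC : ∀ s ∈ Icc (0:ℝ) ℓ,
      deriv (deriv (fun t => η (lam t))) s - η (lam s) * gbar s
        > c * η (lam s) * pq s) :
    False :=
  stmt7_general D ℓ hℓ lam hin h0 hl gbar hgbar η c hc pq pmin hpmin hpq hηpos hη0 hθC hGNCC
end
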